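/- arXiv:1202.1980 — 4 statements merged into one kernel-verified Lean document; each statement's English description precedes it below -/
import Mathlib

section
/- Let ρ and ρ' be runs with ρ ↪ ρ' (jump relation), and let ρ̂ be the immediate predecessor of ρ' (the unique run with ρ̂ → ρ'). Then ρ ⊞ ρ̂. -/
namespace S4

/-- Proper initial segment of runs. -/
def PPrefix {C : Type} (x y : List C) : Prop := x <+: y ∧ x ≠ y

/-- The `⊞`-relation: `ρ` is a proper initial segment of `ρ'`, the width of the
final stack increases by exactly `1`, and all strictly intermediate runs have
larger width than `ρ`. -/
def PlusEdge {C : Type} (W : List C → ℕ) (ρ ρ' : List C) : Prop :=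
  PPrefix ρ ρ' ∧ W ρ + 1 = W ρ' ∧
    ∀ π, PPrefix ρ π → PPrefix π ρ' → W ρ < W π

/-- The jump relation of an `n`-NPT, described via the final stack `stk` and
the width `W` of the final stack: `ρ'` extends `ρ` by a run of length `≥ 2`
which starts with a level-`n` push (so every strictly intermediate run has
width `> W ρ` and final stack different from that of `ρ`), ends with a
level-`n` pop (so the immediate predecessor of `ρ'` has width `W ρ + 1`), and
returns to the stack of `ρ` exactly at the end. -/
def Jump {C St : Type} (stk : List C → St) (W : List C → ℕ) (ρ ρ' : List C) : Prop :=
  PPrefix ρ ρ' ∧ ρ.length + 2 ≤ ρ'.length ∧ stk ρ' = stk ρ ∧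
    (∀ π, PPrefix ρ π → PPrefix π ρ' → W ρ < W π ∧ stk π ≠ stk ρ) ∧
    (∀ π, π <+: ρ' → π.length + 1 = ρ'.length → W π = W ρ + 1)

/-- If `ρ ↪ ρ'` and `ρ̂` is the immediate predecessor of `ρ'`, then `ρ ⊞ ρ̂`. -/
theorem jump_pred_plusEdge {C St : Type} (stk : List C → St) (W : List C → ℕ)
    (ρ ρ' ρh : List C) (hj : Jump stk W ρ ρ')
    (hpred : ρh <+: ρ' ∧ ρh.length + 1 = ρ'.length) :
    PlusEdge W ρ ρh := by
  obtain ⟨⟨hpre, _⟩, hlen, _, hmid, hlast⟩ := hj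
  obtain ⟨hhpre, hhlen⟩ := hpred
  have hlt : ρ.length < ρh.length := by omega
  have hρρh : ρ <+: ρh :=
    List.prefix_of_prefix_length_le hpre hhpre (le_of_lt hlt)
  have hne : ρ ≠ ρh := fun h => by rw [h] at hlt; omega
  refine ⟨⟨hρρh, hne⟩, (hlast ρh hhpre hhlen).symm, ?_⟩
  intro π h1 h2
  have hπρ' : π <+: ρ' := h2.1.trans hhpre
  have hπlt : π.length < ρh.length := by
    rcases lt_or_eq_of_le (List.IsPrefix.length_le h2.1) with h | h
    · exact h
    · exact absurd (h2.1.eq_of_length h) h2.2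
  have hπne : π ≠ ρ' := fun h => by rw [h] at hπlt; omega
  exact (hmid π h1 ⟨hπρ', hπne⟩).1

end S4
end

section
/- Let ρ₁, ρ₂ be runs in an n-NPT and l₁, l₂ ∈ ℕ. If ρ₁ ∈ RelAnc_{l₁}(ρ₂), then RelAnc_{l₂}(ρ₁) ⊆ RelAnc_{l₁+l₂}(ρ₂) and RelAnc_{l₂}(ρ₂) ∩ {π : π ⪯ ρ₁} ⊆ RelAnc_{l₁+l₂}(ρ₁). -/
namespace S7

/-- Proper initial segment of runs. -/
def PPrefix {C : Type} (x y : List C) : Prop := x <+: y ∧ x ≠ y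

/-- Relevant `l`-ancestors, generated backwards by the one-step transition
relation `r₁`, the jump relation `r₂` and the `⊞`-relation `r₃`. -/
def relAnc {C : Type} (r₁ r₂ r₃ : List C → List C → Prop) : ℕ → List C → Set (List C)
  | 0, ρ => {ρ}
  | l + 1, ρ => relAnc r₁ r₂ r₃ l ρ ∪
      {π | ∃ π' ∈ relAnc r₁ r₂ r₃ l ρ, r₁ π π' ∨ r₂ π π' ∨ r₃ π π'}

section Aux

variable {C : Type} {W : List C → ℕ} {r₁ r₂ r₃ : List C → List C → Prop}

lemma relAnc_mono {l m : ℕ} (h : l ≤ m) (ρ : List C) :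
    relAnc r₁ r₂ r₃ l ρ ⊆ relAnc r₁ r₂ r₃ m ρ := by
  induction m with
  | zero => obtain rfl := Nat.le_zero.mp h; exact Set.Subset.refl _
  | succ m ih =>
    rcases Nat.lt_succ_iff_lt_or_eq.mp (Nat.lt_succ_of_le h) with h' | rfl
    · exact (ih (Nat.lt_succ_iff.mp h')).trans Set.subset_union_left
    · exact Set.Subset.refl _

lemma relAnc_self (l : ℕ) (ρ : List C) : ρ ∈ relAnc r₁ r₂ r₃ l ρ :=
  relAnc_mono (Nat.zero_le l) ρ rfl

lemma relAnc_comp {l₁ l₂ : ℕ} {x y : List C} (hx : x ∈ relAnc r₁ r₂ r₃ l₁ y) :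
    relAnc r₁ r₂ r₃ l₂ x ⊆ relAnc r₁ r₂ r₃ (l₁ + l₂) y := by
  induction l₂ with
  | zero => intro σ hσ; obtain rfl : σ = x := hσ; exact hx
  | succ l ih =>
    intro σ hσ
    rcases hσ with hσ | ⟨σ', hσ', hr⟩
    · exact relAnc_mono (by omega) y (ih hσ)
    · exact relAnc_mono (by omega : (l₁ + l) + 1 ≤ l₁ + (l + 1)) y
        (Or.inr ⟨σ', ih hσ', hr⟩)

lemma relAnc_isPrefix
    (h₁ : ∀ x y, r₁ x y → PPrefix x y ∧ y.length = x.length + 1)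
    (h₂₃ : ∀ x y, r₂ x y ∨ r₃ x y → PPrefix x y ∧ W y = W x + 1 ∧
      ∀ z, PPrefix x z → PPrefix z y → W x < W z)
    {l : ℕ} {ρ σ : List C} (h : σ ∈ relAnc r₁ r₂ r₃ l ρ) : σ <+: ρ := by
  induction l generalizing σ with
  | zero => obtain rfl : σ = ρ := h; exact List.prefix_refl _
  | succ l ih =>
    rcases h with h | ⟨σ', hσ', hr⟩
    · exact ih h
    · have hp : σ <+: σ' := by
        rcases hr with hr | hr
        · exact (h₁ _ _ hr).1.1
        · exact (h₂₃ _ _ hr).1.1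
      exact hp.trans (ih hσ')

lemma relAnc_width
    (hcont : ∀ (x : List C) (c : C), W (x ++ [c]) ≤ W x + 1 ∧ W x ≤ W (x ++ [c]) + 1)
    (h₁ : ∀ x y, r₁ x y → PPrefix x y ∧ y.length = x.length + 1)
    (h₂₃ : ∀ x y, r₂ x y ∨ r₃ x y → PPrefix x y ∧ W y = W x + 1 ∧
      ∀ z, PPrefix x z → PPrefix z y → W x < W z)
    {l : ℕ} {ρ σ : List C} (h : σ ∈ relAnc r₁ r₂ r₃ l ρ) :
    W ρ ≤ W σ + l ∧ W σ ≤ W ρ + l := by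
  induction l generalizing σ with
  | zero => obtain rfl : σ = ρ := h; omega
  | succ l ih =>
    rcases h with h | ⟨σ', hσ', hr⟩
    · have := ih h; omega
    · have hstep : W σ' ≤ W σ + 1 ∧ W σ ≤ W σ' + 1 := by
        rcases hr with hr | hr
        · obtain ⟨⟨⟨t, rfl⟩, _⟩, hlen⟩ := h₁ _ _ hr
          have ht : t.length = 1 := by
            have : (σ ++ t).length = σ.length + t.length := List.length_append; omega
          obtain ⟨c, rfl⟩ := List.length_eq_one_iff.mp ht
          exact hcont σ c
        · have := (h₂₃ _ _ hr).2.1; omega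
      have := ih hσ'; omega

lemma relAnc_part2
    (hcont : ∀ (x : List C) (c : C), W (x ++ [c]) ≤ W x + 1 ∧ W x ≤ W (x ++ [c]) + 1)
    (h₁ : ∀ x y, r₁ x y → PPrefix x y ∧ y.length = x.length + 1)
    (h₂₃ : ∀ x y, r₂ x y ∨ r₃ x y → PPrefix x y ∧ W y = W x + 1 ∧
      ∀ z, PPrefix x z → PPrefix z y → W x < W z)
    (hpop : ∀ (σ π : List C) (k : ℕ), π <+: σ → W π + k = W σ →
      (∀ z, PPrefix π z → z <+: σ → W π < W z) → π ∈ relAnc r₁ r₂ r₃ k σ)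
    {l₁ l₂ : ℕ} {ρ₁ ρ₂ π : List C} (hρ₁ : ρ₁ ∈ relAnc r₁ r₂ r₃ l₁ ρ₂)
    (hπ : π ∈ relAnc r₁ r₂ r₃ l₂ ρ₂) (hpre : π <+: ρ₁) :
    π ∈ relAnc r₁ r₂ r₃ (l₁ + l₂) ρ₁ := by
  induction l₂ generalizing π with
  | zero =>
    obtain rfl : π = ρ₂ := hπ
    obtain rfl : π = ρ₁ :=
      hpre.eq_of_length_le ((relAnc_isPrefix h₁ h₂₃ hρ₁).length_le)
    exact relAnc_self _ _
  | succ l ih =>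
    rcases hπ with hπ | ⟨π', hπ', hr⟩
    · exact relAnc_mono (by omega) ρ₁ (ih hπ hpre)
    · -- π related to π' ∈ relAnc l ρ₂
      have hπ'ρ₂ : π' <+: ρ₂ := relAnc_isPrefix h₁ h₂₃ hπ'
      have hρ₁ρ₂ : ρ₁ <+: ρ₂ := relAnc_isPrefix h₁ h₂₃ hρ₁
      by_cases hc : π' <+: ρ₁
      · exact relAnc_mono (by omega : (l₁ + l) + 1 ≤ l₁ + (l + 1)) ρ₁
          (Or.inr ⟨π', ih hπ' hc, hr⟩)
      · have hρ₁π' : ρ₁ <+: π' := (List.prefix_or_prefix_of_prefix hρ₁ρ₂ hπ'ρ₂).resolve_right hc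
        have hρ₁ne : ρ₁ ≠ π' := fun h => hc (h ▸ List.prefix_refl _)
        by_cases hπρ₁ : π = ρ₁
        · exact hπρ₁ ▸ relAnc_self _ _
        rcases hr with hr | hr
        · -- one-step transition: impossible, no room between π and π'
          obtain ⟨hpp, hlen⟩ := h₁ _ _ hr
          have h1 : π.length < ρ₁.length :=
            lt_of_le_of_ne hpre.length_le (fun h => hπρ₁ (hpre.eq_of_length h))
          have h2 : ρ₁.length < π'.length :=
            lt_of_le_of_ne hρ₁π'.length_le (fun h => hρ₁ne (hρ₁π'.eq_of_length h))
          omega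
        · obtain ⟨hpp, hW, hmin⟩ := h₂₃ _ _ hr
          have hWρ₁ : W π < W ρ₁ := hmin ρ₁ ⟨hpre, hπρ₁⟩ ⟨hρ₁π', hρ₁ne⟩
          obtain ⟨k, hk⟩ : ∃ k, W π + k = W ρ₁ := ⟨W ρ₁ - W π, by omega⟩
          have hmem : π ∈ relAnc r₁ r₂ r₃ k ρ₁ := by
            refine hpop ρ₁ π k hpre hk ?_
            intro z hπz hzρ₁
            rcases eq_or_ne z ρ₁ with rfl | hz
            · exact hWρ₁
            · exact hmin z hπz ⟨hzρ₁.trans hρ₁π',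
                fun h => hρ₁ne (hρ₁π'.eq_of_length_le (h ▸ hzρ₁).length_le)⟩
          have hw1 := relAnc_width hcont h₁ h₂₃ hρ₁
          have hw2 := relAnc_width hcont h₁ h₂₃ hπ'
          -- W π' = W π + 1, W ρ₂ ≤ W π' + l, W ρ₁ ≤ W ρ₂ + l₁
          exact relAnc_mono (by omega : k ≤ l₁ + (l + 1)) ρ₁ hmem

end Aux

/-- Composition lemma for relevant ancestors: if `ρ₁ ∈ RelAnc_{l₁}(ρ₂)`, then
`RelAnc_{l₂}(ρ₁) ⊆ RelAnc_{l₁+l₂}(ρ₂)` and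
`RelAnc_{l₂}(ρ₂) ∩ {π : π ⪯ ρ₁} ⊆ RelAnc_{l₁+l₂}(ρ₁)`.

Hypotheses encode the `n`-NPT setting: widths change by at most `1` along a
run; one-step transitions relate a run to its one-step extensions; `↪` and `⊞`
relate runs of widths `k` and `k + 1` with no intermediate run of width `≤ k`;
and the minimality property that the maximal initial segment `π` of `σ` of
width `|σ| − k` (i.e. `Pop_n^k(σ)`) belongs to `RelAnc_k(σ)`. -/
theorem relAnc_composition {C : Type} (W : List C → ℕ)
    (r₁ r₂ r₃ : List C → List C → Prop)
    (hcont : ∀ (x : List C) (c : C), W (x ++ [c]) ≤ W x + 1 ∧ W x ≤ W (x ++ [c]) + 1)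
    (h₁ : ∀ x y, r₁ x y → PPrefix x y ∧ y.length = x.length + 1)
    (h₂₃ : ∀ x y, r₂ x y ∨ r₃ x y → PPrefix x y ∧ W y = W x + 1 ∧
      ∀ z, PPrefix x z → PPrefix z y → W x < W z)
    (hpop : ∀ (σ π : List C) (k : ℕ), π <+: σ → W π + k = W σ →
      (∀ z, PPrefix π z → z <+: σ → W π < W z) → π ∈ relAnc r₁ r₂ r₃ k σ)
    (l₁ l₂ : ℕ) (ρ₁ ρ₂ : List C) (h : ρ₁ ∈ relAnc r₁ r₂ r₃ l₁ ρ₂) :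
    relAnc r₁ r₂ r₃ l₂ ρ₁ ⊆ relAnc r₁ r₂ r₃ (l₁ + l₂) ρ₂ ∧
      ∀ π ∈ relAnc r₁ r₂ r₃ l₂ ρ₂, π <+: ρ₁ → π ∈ relAnc r₁ r₂ r₃ (l₁ + l₂) ρ₁ := by
  exact ⟨relAnc_comp h, fun π hπ hpre => relAnc_part2 hcont h₁ h₂₃ hpop h hπ hpre⟩

end S7
end

section
/- The prefix-replacement operation on level-2 stacks preserves runs: if ρ is a run of a 2-PS S, s and u are 2-stacks with s ⊑ ρ(i) for every position i (s is a prefix of every stack occurring in ρ) and top₁(u) = top₁(s), then the sequence i ↦ ρ(i)[s/u] is again a run of S. -/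
namespace S12

variable {Q A : Type}

/-- Words: the topmost symbol is the last entry. -/
abbrev Word (A : Type) := List A

/-- Level-2 stacks: lists of words, the topmost word being the last entry. -/
abbrev Stk2 (A : Type) := List (Word A)

/-- The topmost word of a `2`-stack. -/
def top2 (s : Stk2 A) : Word A := s.getLastD []

/-- The topmost symbol of a `2`-stack. -/
def top1 (s : Stk2 A) : Option A := (top2 s).getLast?

/-- Level-2 stack operations. -/
inductive Op (A : Type) where
  | push (a : A)
  | pop1
  | clone2
  | pop2

/-- Partial application of a stack operation. -/
def applyOp : Op A → Stk2 A → Option (Stk2 A)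
  | .push a, s => s.getLast?.map (fun w => s.dropLast ++ [w ++ [a]])
  | .pop1, s =>
      match s.getLast? with
      | some w => if 2 ≤ w.length then some (s.dropLast ++ [w.dropLast]) else none
      | none => none
  | .clone2, s => s.getLast?.map (fun w => s ++ [w])
  | .pop2, s => if 2 ≤ s.length then some s.dropLast else none

/-- A level-2 pushdown system: a set of transitions `(q, σ, q', op)`. -/
structure PS2 (Q A : Type) where
  trans : Set (Q × A × Q × Op A)

/-- Configurations. -/
abbrev Conf (Q A : Type) := Q × Stk2 A

/-- One step of the 2-PS `S`: some transition `(q, σ, q', op)` applies, the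
topmost symbol being `σ`. -/
def stepRel (S : PS2 Q A) (c c' : Conf Q A) : Prop :=
  ∃ σ op, (c.1, σ, c'.1, op) ∈ S.trans ∧ top1 c.2 = some σ ∧
    applyOp op c.2 = some c'.2


/-- `s ⊑ t`: the prefix relation on level-2 stacks. -/
def Pref2 (s t : Stk2 A) : Prop :=
  ∃ ws w vs, s = ws ++ [w] ∧ t = ws ++ vs ∧ vs ≠ [] ∧ ∀ v ∈ vs, w <+: v

/-- `repl s u t` is the stack `t[s/u]` obtained from `t` by replacing the
prefix `s` by `u`. -/
def repl (s u t : Stk2 A) : Stk2 A :=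
  u.dropLast ++ (t.drop (s.length - 1)).map
    (fun v => u.getLastD [] ++ v.drop (s.getLastD []).length)

lemma repl_eq (ws : List (List A)) (w : Word A) (u vs : Stk2 A) :
    repl (ws ++ [w]) u (ws ++ vs) =
      u.dropLast ++ vs.map (fun v => u.getLastD [] ++ v.drop w.length) := by
  unfold repl
  rw [List.getLastD_concat]
  have h : (ws ++ [w]).length - 1 = ws.length := by simp
  rw [h, List.drop_left]

lemma key (s u : Stk2 A) (hu : u ≠ []) (htop : top1 u = top1 s)
    (op : Op A) (t t' : Stk2 A) (ht : Pref2 s t) (ht' : Pref2 s t')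
    (happ : applyOp op t = some t') :
    top1 (repl s u t) = top1 t ∧ applyOp op (repl s u t) = some (repl s u t') := by
  obtain ⟨ws, w, vs, hs, rfl, hvs, hall⟩ := ht
  obtain ⟨ws', w', vs', hs', ht'eq0, hvs', hall'0⟩ := ht'
  obtain ⟨hws, hw0⟩ := List.append_inj' (hs'.symm.trans hs) rfl
  injection hw0 with hw0
  have ht'eq : t' = ws ++ vs' := by rw [ht'eq0, hws]
  have hall' : ∀ v ∈ vs', w <+: v := by
    intro v hv; rw [← hw0]; exact hall'0 v hv
  clear ht'eq0 hall'0 hs' hws hw0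
  subst hs
  obtain ⟨vs₀, v, hvc⟩ := vs.eq_nil_or_concat.resolve_left hvs
  rw [List.concat_eq_append] at hvc
  subst hvc
  obtain ⟨r, hv⟩ := hall v (by simp)
  subst hv
  have htop' : (u.getLastD []).getLast? = w.getLast? := by
    simpa [top1, top2, List.getLastD_concat] using htop
  have hrepl : repl (ws ++ [w]) u (ws ++ (vs₀ ++ [w ++ r])) =
      u.dropLast ++ (vs₀.map (fun v => u.getLastD [] ++ v.drop w.length)
        ++ [u.getLastD [] ++ r]) := by
    rw [repl_eq]; simp [List.drop_left]
  have htop1 : top1 (repl (ws ++ [w]) u (ws ++ (vs₀ ++ [w ++ r]))) =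
      top1 (ws ++ (vs₀ ++ [w ++ r])) := by
    rw [hrepl]
    unfold top1 top2
    rw [← List.append_assoc, ← List.append_assoc, List.getLastD_concat,
      List.getLastD_concat, List.getLast?_append, List.getLast?_append, htop']
  refine ⟨htop1, ?_⟩
  have hlast : (ws ++ (vs₀ ++ [w ++ r])).getLast? = some (w ++ r) := by
    rw [← List.append_assoc]; exact List.getLast?_concat
  have hrlast : (u.dropLast ++ (vs₀.map (fun v => u.getLastD [] ++ v.drop w.length)
      ++ [u.getLastD [] ++ r])).getLast? = some (u.getLastD [] ++ r) := by
    rw [← List.append_assoc]; exact List.getLast?_concat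
  cases op with
  | push a =>
      simp only [applyOp, hlast, Option.map_some, Option.some_inj] at happ
      rw [← List.append_assoc, List.dropLast_concat] at happ
      subst happ
      simp only [applyOp, hrepl, hrlast, Option.map_some, Option.some_inj]
      rw [← List.append_assoc, List.dropLast_concat]
      rw [show ws ++ vs₀ ++ [w ++ r ++ [a]] = ws ++ (vs₀ ++ [w ++ (r ++ [a])]) by
        simp [List.append_assoc], repl_eq]
      simp [List.drop_left, List.append_assoc]
  | pop1 =>
      simp only [applyOp, hlast] at happ
      split_ifs at happ with hlen
      · injection happ with happ
        rw [← List.append_assoc, List.dropLast_concat] at happ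
        rw [← happ] at ht'eq
        have hvs'eq : vs' = vs₀ ++ [(w ++ r).dropLast] := by
          refine List.append_cancel_left (ht'eq.symm.trans ?_)
          rw [List.append_assoc]
        have hpref' : w <+: (w ++ r).dropLast := by
          apply hall'; rw [hvs'eq]; simp
        have hr : r ≠ [] := by
          intro h; subst h
          simp only [List.append_nil] at hlen hpref'
          have h1 := hpref'.length_le
          have h2 : w.dropLast.length = w.length - 1 := by simp
          omega
        obtain ⟨r₀, c, hrc⟩ := r.eq_nil_or_concat.resolve_left hr
        rw [List.concat_eq_append] at hrc
        subst hrc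
        have hdl : (w ++ (r₀ ++ [c])).dropLast = w ++ r₀ := by
          rw [← List.append_assoc, List.dropLast_concat]
        subst happ
        simp only [applyOp, hrepl, hrlast]
        have hlu : 2 ≤ (u.getLastD [] ++ (r₀ ++ [c])).length := by
          by_cases hr0 : r₀ = []
          · subst hr0
            have hwne : w ≠ [] := by
              intro h; rw [h] at hlen; simp at hlen
            have hlune : u.getLastD [] ≠ [] := by
              rw [← List.getLast?_isSome, htop', List.getLast?_isSome]; exact hwne
            have := List.length_pos_iff.mpr hlune
            simp only [List.length_append, List.nil_append, List.length_cons,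
              List.length_nil]; omega
          · have := List.length_pos_iff.mpr hr0
            simp only [List.length_append, List.length_cons, List.length_nil]; omega
        rw [if_pos hlu, ← List.append_assoc, List.dropLast_concat, Option.some_inj,
          ← List.append_assoc (u.getLastD []) r₀ [c], List.dropLast_concat]
        rw [hdl, show ws ++ vs₀ ++ [w ++ r₀] = ws ++ (vs₀ ++ [w ++ r₀]) by
          rw [List.append_assoc], repl_eq]
        simp [List.drop_left, List.append_assoc]
  | clone2 =>
      simp only [applyOp, hlast, Option.map_some, Option.some_inj] at happ
      subst happ
      simp only [applyOp, hrepl, hrlast, Option.map_some, Option.some_inj]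
      rw [show ws ++ (vs₀ ++ [w ++ r]) ++ [w ++ r] = ws ++ (vs₀ ++ [w ++ r] ++ [w ++ r]) by
        simp [List.append_assoc], repl_eq]
      simp [List.drop_left, List.append_assoc]
  | pop2 =>
      simp only [applyOp] at happ
      split_ifs at happ with hlen
      · injection happ with happ
        rw [← List.append_assoc, List.dropLast_concat] at happ
        rw [← happ] at ht'eq
        have hvs'eq : vs' = vs₀ := List.append_cancel_left ht'eq.symm
        have hvs₀ : vs₀ ≠ [] := hvs'eq ▸ hvs'
        have hlp := List.length_pos_iff.mpr hvs₀
        subst happ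
        simp only [applyOp, hrepl]
        rw [if_pos (by simp; omega), Option.some_inj, ← List.append_assoc,
          List.dropLast_concat, repl_eq]


/-- Prefix replacement preserves runs: if `ρ` is a run of the 2-PS `S`, `s` is
a prefix of every stack occurring in `ρ` and `top₁(u) = top₁(s)`, then
`i ↦ ρ(i)[s/u]` is again a run of `S`. -/
theorem prefix_replacement_preserves_runs
    (S : PS2 Q A) (ρ : ℕ → Conf Q A) (n : ℕ)
    (hrun : ∀ i < n, stepRel S (ρ i) (ρ (i + 1)))
    (s u : Stk2 A) (hs : s ≠ []) (hu : u ≠ [])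
    (hpref : ∀ i ≤ n, Pref2 s (ρ i).2)
    (htop : top1 u = top1 s) :
    ∀ i < n, stepRel S ((ρ i).1, repl s u (ρ i).2)
      ((ρ (i + 1)).1, repl s u (ρ (i + 1)).2) := by
  intro i hi
  obtain ⟨σ, op, hmem, htop1, happ⟩ := hrun i hi
  obtain ⟨h1, h2⟩ := key s u hu htop op (ρ i).2 (ρ (i + 1)).2
    (hpref i hi.le) (hpref (i + 1) hi) happ
  exact ⟨σ, op, hmem, by rw [h1, htop1], h2⟩

end S12
end

section
/- Transfer of runs to equivalent prefixes: let z ≥ 2, z > m, and let w ≡^{n+1}_z w'. Given pairwise distinct runs ρ₁, …, ρ_m where ρ_i goes from (q_i, w) to (q̂_i, v_i) for prefixes v_i ≤ w, there exist prefixes v'₁, …, v'_m ≤ w' with v_i ≡ⁿ_z v'_i and pairwise distinct runs ρ'₁, …, ρ'_m from (q_i, w') to (q̂_i, v'_i). Moreover v_i = w iff v'_i = w', and if v_i < w then there is a letter a_i with w = v_i a_i u_i and w' = v'_i a_i u'_i for some words u_i, u'_i. -/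
namespace S17

variable {Q A : Type}

/-- Words: the topmost symbol is the last entry. -/
abbrev Word (A : Type) := List A

/-- Level-2 stacks: lists of words, the topmost word being the last entry. -/
abbrev Stk2 (A : Type) := List (Word A)

/-- The topmost word of a `2`-stack. -/
def top2 (s : Stk2 A) : Word A := s.getLastD []

/-- The topmost symbol of a `2`-stack. -/
def top1 (s : Stk2 A) : Option A := (top2 s).getLast?

/-- Level-2 stack operations. -/
inductive Op (A : Type) where
  | push (a : A)
  | pop1
  | clone2
  | pop2

/-- Partial application of a stack operation. -/
def applyOp : Op A → Stk2 A → Option (Stk2 A)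
  | .push a, s => s.getLast?.map (fun w => s.dropLast ++ [w ++ [a]])
  | .pop1, s =>
      match s.getLast? with
      | some w => if 2 ≤ w.length then some (s.dropLast ++ [w.dropLast]) else none
      | none => none
  | .clone2, s => s.getLast?.map (fun w => s ++ [w])
  | .pop2, s => if 2 ≤ s.length then some s.dropLast else none

/-- A level-2 pushdown system: a set of transitions `(q, σ, q', op)`. -/
structure PS2 (Q A : Type) where
  trans : Set (Q × A × Q × Op A)

/-- Configurations. -/
abbrev Conf (Q A : Type) := Q × Stk2 A

/-- One step of the 2-PS `S`: some transition `(q, σ, q', op)` applies, the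
topmost symbol being `σ`. -/
def stepRel (S : PS2 Q A) (c c' : Conf Q A) : Prop :=
  ∃ σ op, (c.1, σ, c'.1, op) ∈ S.trans ∧ top1 c.2 = some σ ∧
    applyOp op c.2 = some c'.2


/-- `ρ` is a run of `S`. -/
def IsRunL (S : PS2 Q A) (ρ : List (Conf Q A)) : Prop := ρ.Chain' (stepRel S)

/-- Returns from `(q, s : w)` to `(q', s)`. -/
def ReturnRuns (S : PS2 Q A) (s : Stk2 A) (w : Word A) (q q' : Q) :
    Set (List (Conf Q A)) :=
  {ρ | IsRunL S ρ ∧ ρ.head? = some (q, s ++ [w]) ∧ ρ.getLast? = some (q', s) ∧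
    2 ≤ ρ.length ∧ ∀ (i : ℕ) (h : i + 1 < ρ.length), (ρ.get ⟨i, by omega⟩).2 ≠ s}

/-- Loops from `(q, s : w)` to `(q', s : w)`. -/
def LoopRuns (S : PS2 Q A) (s : Stk2 A) (w : Word A) (q q' : Q) :
    Set (List (Conf Q A)) :=
  {ρ | IsRunL S ρ ∧ ρ.head? = some (q, s ++ [w]) ∧
    ρ.getLast? = some (q', s ++ [w]) ∧
    ∀ (i : ℕ) (h : i < ρ.length), (ρ.get ⟨i, h⟩).2 ≠ s}

/-- High loops of `(q, s : w)`. -/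
def HighLoopRuns (S : PS2 Q A) (s : Stk2 A) (w : Word A) (q q' : Q) :
    Set (List (Conf Q A)) :=
  {ρ | ρ ∈ LoopRuns S s w q q' ∧
    ∀ (i : ℕ) (h : i < ρ.length), (ρ.get ⟨i, h⟩).2 ≠ s ++ [w.dropLast]}

/-- `X` contains at least `j` pairwise distinct elements. -/
def hasAtLeast {α : Type} (j : ℕ) (X : Set α) : Prop :=
  ∃ t : Finset α, ↑t ⊆ X ∧ t.card = j

/-- Cardinality of `X` counted up to threshold `z`. -/
noncomputable def tcount {α : Type} (z : ℕ) (X : Set α) : ℕ :=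
  sSup {j | j ≤ z ∧ hasAtLeast j X}

/-- The prefix `w_{-i} = pop₁^i(w)` of the word `w`. -/
def pre (w : Word A) (i : ℕ) : Word A := w.take (w.length - i)

/-- Runs from `(q, w)` to `(q', w_{-i})` (counted by the predicates
`S^j_{q,q'}` of the expanded word model). -/
def SRuns (S : PS2 Q A) (w : Word A) (i : ℕ) (q q' : Q) :
    Set (List (Conf Q A)) :=
  {ρ | IsRunL S ρ ∧ ρ.head? = some (q, [w]) ∧ ρ.getLast? = some (q', [pre w i])}

/-- The atomic data of position `i` in the expanded word model
`Lin(0,z,z)(w)`: the topmost letter of the prefix `w_{-i}`, and the numbers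
(up to threshold `z`) of runs from `(q, w)` to `(q', w_{-i})`, of returns, of
loops, and of high loops of `w_{-i}`, for all pairs of states. -/
noncomputable def atom0 (S : PS2 Q A) (z : ℕ) (w : Word A) (i : ℕ) :
    Option A × (Q → Q → ℕ) × (Q → Q → ℕ) × (Q → Q → ℕ) × (Q → Q → ℕ) :=
  ((pre w i).getLast?,
    fun q q' => tcount z (SRuns S w i q q'),
    fun q q' => tcount z (ReturnRuns S [[]] (pre w i) q q'),
    fun q q' => tcount z (LoopRuns S [[]] (pre w i) q q'),
    fun q q' => tcount z (HighLoopRuns S [[]] (pre w i) q q'))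

/-- Partial isomorphism between the expanded word models with domains
`{0, …, n₁ − 1}` and `{0, …, n₂ − 1}` (with the reversed-order successor
relation), where the compatibility of the colours of matched positions is given
by the relation `compat`. -/
def PIsoR (n₁ n₂ : ℕ) (compat : ℕ → ℕ → Prop) (as bs : List ℕ) : Prop :=
  as.length = bs.length ∧ (∀ a ∈ as, a < n₁) ∧ (∀ b ∈ bs, b < n₂) ∧
    ∀ k l, k < as.length → l < as.length →
      ((as.getD k 0 = as.getD l 0) ↔ (bs.getD k 0 = bs.getD l 0)) ∧
      ((as.getD k 0 = as.getD l 0 + 1) ↔ (bs.getD k 0 = bs.getD l 0 + 1)) ∧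
      compat (as.getD k 0) (bs.getD k 0)

/-- Duplicator wins the `z`-round Ehrenfeucht–Fraïssé game on the two coloured
successor structures, from the position given by `as` and `bs`.  (This is
equivalent to the structures with the chosen parameters satisfying the same
first-order sentences of quantifier rank `≤ z`.) -/
def EFR (n₁ n₂ : ℕ) (compat : ℕ → ℕ → Prop) : ℕ → List ℕ → List ℕ → Prop
  | 0, as, bs => PIsoR n₁ n₂ compat as bs
  | z + 1, as, bs => PIsoR n₁ n₂ compat as bs ∧
      (∀ a < n₁, ∃ b < n₂, EFR n₁ n₂ compat z (as ++ [a]) (bs ++ [b])) ∧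
      (∀ b < n₂, ∃ a < n₁, EFR n₁ n₂ compat z (as ++ [a]) (bs ++ [b]))

/-- The word equivalence `w ≡ⁿ_z w'`, i.e. `Typ(n,z,z)(w) = Typ(n,z,z)(w')`:
the expanded word models `Lin(n,z,z)(w)` and `Lin(n,z,z)(w')` (positions
coloured by their atomic data and, for `n > 0`, by the
`≡^{n-1}_z`-class of the corresponding prefix) satisfy the same first-order
sentences of quantifier rank `≤ z`, expressed via the `z`-round
Ehrenfeucht–Fraïssé game. -/
def wEquiv (S : PS2 Q A) (z : ℕ) : ℕ → Word A → Word A → Prop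
  | 0, w, w' => EFR w.length w'.length
      (fun i j => atom0 S z w i = atom0 S z w' j) z [] []
  | n + 1, w, w' => EFR w.length w'.length
      (fun i j => atom0 S z w i = atom0 S z w' j ∧
        wEquiv S z n (pre w i) (pre w' j)) z [] []

/-- The set of runs of `S` from configuration `c` to configuration `c'`. -/
def RunsFT (S : PS2 Q A) (c c' : Conf Q A) : Set (List (Conf Q A)) :=
  {ρ | IsRunL S ρ ∧ ρ.head? = some c ∧ ρ.getLast? = some c'}


section AuxLemmas

/-! ### Generic list/getD helpers -/

lemma getD_append_lt {l₁ l₂ : List ℕ} {i : ℕ} (h : i < l₁.length) :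
    (l₁ ++ l₂).getD i 0 = l₁.getD i 0 := by
  simp [List.getD_eq_getElem?_getD, List.getElem?_append_left h]

lemma getD_append_len {l : List ℕ} {x : ℕ} :
    (l ++ [x]).getD l.length 0 = x := by
  simp [List.getD_eq_getElem?_getD]

lemma getLast?_take {α : Type _} {l : List α} {j : ℕ} (h : j < l.length) :
    (l.take (j+1)).getLast? = l[j]? := by
  rw [List.getLast?_eq_getElem?, List.length_take]
  have h2 : min (j+1) l.length - 1 = j := by omega
  rw [h2, List.getElem?_take_of_lt (by omega)]

/-! ### EF-game helpers -/

lemma pisoR_nil (n₁ n₂ : ℕ) (c : ℕ → ℕ → Prop) : PIsoR n₁ n₂ c [] [] := by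
  refine ⟨rfl, by simp, by simp, ?_⟩
  intro k l hk hl
  simp at hk

lemma efr_pisoR {n₁ n₂ : ℕ} {c : ℕ → ℕ → Prop} {z : ℕ} {as bs : List ℕ}
    (h : EFR n₁ n₂ c z as bs) : PIsoR n₁ n₂ c as bs := by
  cases z with
  | zero => exact h
  | succ z => exact h.1

lemma efr_zero_zero (c : ℕ → ℕ → Prop) (z : ℕ) : EFR 0 0 c z [] [] := by
  cases z with
  | zero => exact pisoR_nil _ _ _
  | succ z =>
    exact ⟨pisoR_nil _ _ _, fun a ha => absurd ha (by omega),
      fun b hb => absurd hb (by omega)⟩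

lemma wEquiv_nil (S : PS2 Q A) (z n : ℕ) : wEquiv S z n ([] : Word A) [] := by
  cases n with
  | zero => exact efr_zero_zero _ _
  | succ n => exact efr_zero_zero _ _

lemma efr_play {n₁ n₂ : ℕ} {c : ℕ → ℕ → Prop} :
    ∀ (la : List ℕ) (z : ℕ) (as bs : List ℕ), la.length ≤ z →
      (∀ a ∈ la, a < n₁) → EFR n₁ n₂ c z as bs →
      ∃ lb : List ℕ, lb.length = la.length ∧
        EFR n₁ n₂ c (z - la.length) (as ++ la) (bs ++ lb)
  | [], z, as, bs, _, _, h => ⟨[], rfl, by simpa using h⟩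
  | a :: la, z, as, bs, hlen, hlt, h => by
      obtain ⟨z, rfl⟩ : ∃ z', z = z' + 1 := ⟨z - 1, by simp at hlen; omega⟩
      obtain ⟨b, hb, hefr⟩ := h.2.1 a (hlt a (by simp))
      obtain ⟨lb, hlb, h'⟩ := efr_play la z (as ++ [a]) (bs ++ [b])
        (by simp at hlen ⊢; omega) (fun x hx => hlt x (by simp [hx])) hefr
      refine ⟨b :: lb, by simp [hlb], ?_⟩
      have : (a :: la).length = la.length + 1 := rfl
      rw [this, Nat.succ_sub_succ]
      simpa [List.append_assoc] using h'

/-! ### tcount helpers -/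

lemma hasAtLeast_zero {α : Type} (X : Set α) : hasAtLeast 0 X :=
  ⟨∅, by simp, rfl⟩

lemma hasAtLeast_mono {α : Type} {j j' : ℕ} {X : Set α} (h : j ≤ j')
    (hX : hasAtLeast j' X) : hasAtLeast j X := by
  obtain ⟨t, ht, hc⟩ := hX
  obtain ⟨t', ht', hc'⟩ := Finset.exists_subset_card_eq (by omega : j ≤ t.card)
  exact ⟨t', fun x hx => ht (ht' hx), hc'⟩

lemma le_tcount {α : Type} {z j : ℕ} {X : Set α} (hj : j ≤ z)
    (h : hasAtLeast j X) : j ≤ tcount z X :=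
  le_csSup ⟨z, fun x hx => hx.1⟩ ⟨hj, h⟩

lemma hasAtLeast_of_le_tcount {α : Type} {z j : ℕ} {X : Set α}
    (h : j ≤ tcount z X) : hasAtLeast j X := by
  have hmem : tcount z X ∈ {j | j ≤ z ∧ hasAtLeast j X} :=
    Nat.sSup_mem ⟨0, Nat.zero_le z, hasAtLeast_zero X⟩ ⟨z, fun x hx => hx.1⟩
  exact hasAtLeast_mono h hmem.2

/-! ### Stacks reachable from a nonempty word have no empty components -/

def GoodStk (s : Stk2 A) : Prop := s ≠ [] ∧ ∀ x ∈ s, x ≠ []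

lemma good_step {S : PS2 Q A} {c c' : Conf Q A} (h : stepRel S c c')
    (hg : GoodStk c.2) : GoodStk c'.2 := by
  obtain ⟨σ, op, _, htop, happ⟩ := h
  obtain ⟨hne, hmem⟩ := hg
  cases op with
  | push a =>
    simp only [applyOp, Option.map_eq_some_iff] at happ
    obtain ⟨wt, hwt, hs'⟩ := happ
    rw [← hs']
    constructor
    · simp
    · intro x hx
      rcases List.mem_append.mp hx with hx | hx
      · exact hmem x (List.dropLast_subset _ hx)
      · simp at hx; subst hx; simp
  | pop1 =>
    simp only [applyOp] at happ
    rcases hwt : c.2.getLast? with _ | wt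
    · rw [hwt] at happ; simp at happ
    · rw [hwt] at happ
      by_cases hlen : 2 ≤ wt.length
      · simp only [if_pos hlen] at happ
        have hs' := Option.some.inj happ
        rw [← hs']
        constructor
        · simp
        · intro x hx
          rcases List.mem_append.mp hx with hx | hx
          · exact hmem x (List.dropLast_subset _ hx)
          · simp at hx; subst hx
            have : wt.dropLast.length = wt.length - 1 := List.length_dropLast (xs := wt)
            intro hcon
            rw [hcon] at this
            simp at this
            omega
      · simp only [if_neg hlen] at happ; simp at happ
  | clone2 =>
    simp only [applyOp, Option.map_eq_some_iff] at happ
    obtain ⟨wt, hwt, hs'⟩ := happ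
    rw [← hs']
    constructor
    · simp
    · intro x hx
      rcases List.mem_append.mp hx with hx | hx
      · exact hmem x hx
      · simp at hx; subst hx
        exact hmem _ (List.mem_of_getLast? hwt)
  | pop2 =>
    simp only [applyOp] at happ
    by_cases hlen : 2 ≤ c.2.length
    · rw [if_pos hlen] at happ
      have hs' := Option.some.inj happ
      rw [← hs']
      constructor
      · intro hcon
        have := List.length_dropLast (xs := c.2)
        rw [hcon] at this
        simp at this
        omega
      · intro x hx
        exact hmem x (List.dropLast_subset _ hx)
    · rw [if_neg hlen] at happ; simp at happ

lemma run_good {S : PS2 Q A} (ρ : List (Conf Q A)) (hr : IsRunL S ρ) :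
    ∀ c, ρ.head? = some c → GoodStk c.2 → ∀ c' ∈ ρ, GoodStk c'.2 := by
  induction ρ with
  | nil => intro c h; simp at h
  | cons c t ih =>
    intro c₀ h hg c' hc'
    rw [List.head?_cons, Option.some_inj] at h
    subst h
    rcases List.mem_cons.mp hc' with rfl | hmem
    · exact hg
    · cases t with
      | nil => simp at hmem
      | cons c₁ t' =>
        have hchain := List.isChain_cons_cons.mp hr
        exact ih hchain.2 c₁ rfl (good_step hchain.1 hg) c' hmem

/-! ### The injective-assignment lemma -/

lemma assignment_aux {ι K β : Type} [DecidableEq ι] [DecidableEq K] [DecidableEq β]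
    [Inhabited β] (k : ι → K) (X : ι → Set β)
    (hXeq : ∀ i j, k i = k j → X i = X j)
    (hXdisj : ∀ i j, k i ≠ k j → ∀ x, x ∈ X i → x ∈ X j → False) :
    ∀ s : Finset ι,
      (∀ i ∈ s, hasAtLeast (s.filter (fun j => k j = k i)).card (X i)) →
      ∃ F : ι → β, Set.InjOn F ↑s ∧ ∀ i ∈ s, F i ∈ X i := by
  intro s
  induction s using Finset.induction_on with
  | empty => intro _; exact ⟨fun _ => default, by simp, by simp⟩
  | @insert a s ha ih =>
    intro hcard
    obtain ⟨F, hinj, hmem⟩ := ih (by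
      intro i hi
      refine hasAtLeast_mono ?_ (hcard i (Finset.mem_insert_of_mem hi))
      exact Finset.card_le_card
        (Finset.filter_subset_filter _ (Finset.subset_insert a s)))
    have hfila : (insert a s).filter (fun j => k j = k a)
        = insert a (s.filter (fun j => k j = k a)) := by
      rw [Finset.filter_insert, if_pos rfl]
    have hccard : ((insert a s).filter (fun j => k j = k a)).card
        = (s.filter (fun j => k j = k a)).card + 1 := by
      rw [hfila, Finset.card_insert_of_notMem (fun hc => ha (Finset.mem_of_mem_filter a hc))]
    obtain ⟨t, htsub, htc⟩ := hcard a (Finset.mem_insert_self a s)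
    rw [hccard] at htc
    have himg : ((s.filter (fun j => k j = k a)).image F).card < t.card := by
      rw [htc]
      exact lt_of_le_of_lt Finset.card_image_le (by omega)
    obtain ⟨y, hyt, hyimg⟩ := Finset.not_subset.mp
      (fun hsub => absurd (Finset.card_le_card hsub) (not_le.mpr himg))
    refine ⟨Function.update F a y, ?_, ?_⟩
    · intro x₁ hx₁ x₂ hx₂ heq
      simp only [Finset.coe_insert, Set.mem_insert_iff, Finset.mem_coe] at hx₁ hx₂
      have key : ∀ x ∈ s, Function.update F a y x ≠ Function.update F a y a := by
        intro x hx
        have hxa : x ≠ a := fun hc => ha (by rwa [hc] at hx)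
        rw [Function.update_of_ne hxa, Function.update_self]
        intro hc
        by_cases hk : k x = k a
        · apply hyimg
          rw [← hc]
          exact Finset.mem_image_of_mem F (Finset.mem_filter.mpr ⟨hx, hk⟩)
        · exact hXdisj x a hk y (hc ▸ hmem x hx) (htsub hyt)
      rcases hx₁ with rfl | hx₁ <;> rcases hx₂ with rfl | hx₂
      · rfl
      · exact absurd heq.symm (key x₂ hx₂)
      · exact absurd heq (key x₁ hx₁)
      · have hx₁a : x₁ ≠ a := fun hc => ha (by rwa [hc] at hx₁)
        have hx₂a : x₂ ≠ a := fun hc => ha (by rwa [hc] at hx₂)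
        rw [Function.update_of_ne hx₁a, Function.update_of_ne hx₂a] at heq
        exact hinj hx₁ hx₂ heq
    · intro i hi
      rcases Finset.mem_insert.mp hi with rfl | hi
      · rw [Function.update_self]
        exact htsub hyt
      · rw [Function.update_of_ne (fun hc => ha (by rwa [hc] at hi))]
        exact hmem i hi

lemma assignment {m : ℕ} {K β : Type} [DecidableEq K] [DecidableEq β] [Inhabited β]
    (k : Fin m → K) (X : Fin m → Set β)
    (hXeq : ∀ i j, k i = k j → X i = X j)
    (hXdisj : ∀ i j, k i ≠ k j → ∀ x, x ∈ X i → x ∈ X j → False)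
    (hcard : ∀ i, hasAtLeast (Finset.univ.filter (fun j => k j = k i)).card (X i)) :
    ∃ F : Fin m → β, Function.Injective F ∧ ∀ i, F i ∈ X i := by
  obtain ⟨F, hinj, hmem⟩ := assignment_aux k X hXeq hXdisj Finset.univ
    (fun i _ => hcard i)
  refine ⟨F, ?_, fun i => hmem i (Finset.mem_univ i)⟩
  intro x₁ x₂ h
  exact hinj (by simp) (by simp) h

end AuxLemmas

/-- Transfer of runs to equivalent prefixes: let `z ≥ 2`, `m < z`, and
`w ≡^{n+1}_z w'`.  Given pairwise distinct runs `ρ₁, …, ρ_m`, where `ρ_i` goes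
from `(q_i, w)` to `(q̂_i, v_i)` for prefixes `v_i ≤ w`, there are prefixes
`v'₁, …, v'_m ≤ w'` with `v_i ≡ⁿ_z v'_i` and pairwise distinct runs
`ρ'₁, …, ρ'_m` from `(q_i, w')` to `(q̂_i, v'_i)`.  Moreover `v_i = w` iff
`v'_i = w'`, and if `v_i < w` then there is a letter `a_i` with
`w = v_i a_i u_i` and `w' = v'_i a_i u'_i` for some words `u_i, u'_i`. -/
theorem transfer_runs_to_prefixes (S : PS2 Q A) (n z m : ℕ)
    (hz : 2 ≤ z) (hm : m < z)
    (w w' : Word A) (hww' : wEquiv S z (n + 1) w w')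
    (q qh : Fin m → Q) (v : Fin m → Word A) (hv : ∀ i, v i <+: w)
    (ρ : Fin m → List (Conf Q A)) (hinj : Function.Injective ρ)
    (hρ : ∀ i, ρ i ∈ RunsFT S (q i, [w]) (qh i, [v i])) :
    ∃ (v' : Fin m → Word A) (ρ' : Fin m → List (Conf Q A)),
      (∀ i, v' i <+: w') ∧
      (∀ i, wEquiv S z n (v i) (v' i)) ∧
      Function.Injective ρ' ∧
      (∀ i, ρ' i ∈ RunsFT S (q i, [w']) (qh i, [v' i])) ∧
      (∀ i, v i = w ↔ v' i = w') ∧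
      (∀ i, v i ≠ w →
        ∃ (a : A) (u u' : Word A), w = v i ++ a :: u ∧ w' = v' i ++ a :: u') := by
  classical
  have hEF : EFR w.length w'.length
      (fun i j => atom0 S z w i = atom0 S z w' j ∧ wEquiv S z n (pre w i) (pre w' j))
      z [] [] := hww'
  by_cases hw : w = []
  · -- degenerate case: `w` is the empty word, hence so is `w'`.
    have hw' : w' = [] := by
      by_contra hne
      obtain ⟨z1, rfl⟩ : ∃ z1, z = z1 + 1 := ⟨z - 1, by omega⟩
      obtain ⟨a0, ha0, -⟩ := hEF.2.2 0 (List.length_pos_iff.mpr hne)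
      rw [hw] at ha0
      simp at ha0
    have hv0 : ∀ i, v i = [] := by
      intro i
      have h := hv i
      rw [hw] at h
      simpa using h
    refine ⟨fun _ => [], ρ, ?_, ?_, hinj, ?_, ?_, ?_⟩
    · intro i; rw [hw']
    · intro i; rw [hv0 i]; exact wEquiv_nil S z n
    · intro i
      have h := hρ i
      rw [hw, hv0 i] at h
      rw [hw']
      exact h
    · intro i; simp [hv0 i, hw, hw']
    · intro i hvi; exact absurd ((hv0 i).trans hw.symm) hvi
  · -- main case: `w` is nonempty.
    have hLpos : 0 < w.length := List.length_pos_iff.mpr hw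
    -- the prefixes `v i` are nonempty
    have hvne : ∀ i, v i ≠ [] := by
      intro i
      obtain ⟨hrun, hhead, hlast⟩ := hρ i
      have hgood := run_good (ρ i) hrun (q i, [w]) hhead
        ⟨by simp, by intro x hx; simp at hx; subst hx; exact hw⟩
      have hmem := hgood _ (List.mem_of_getLast? hlast)
      exact hmem.2 (v i) (by simp)
    have hvlen : ∀ i, (v i).length ≤ w.length := fun i => (hv i).length_le
    have hvpos : ∀ i, 0 < (v i).length := fun i => List.length_pos_iff.mpr (hvne i)
    have haL : ∀ i : Fin m, w.length - (v i).length < w.length := by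
      intro i; have := hvpos i; omega
    have hvpre : ∀ i, v i = pre w (w.length - (v i).length) := by
      intro i
      have h := List.prefix_iff_eq_take.mp (hv i)
      rw [pre, show w.length - (w.length - (v i).length) = (v i).length by
        have := hvlen i; omega]
      exact h
    -- play the EF game with the positions of the prefixes `v i`
    have hlamem : ∀ x ∈ (List.ofFn (fun j : Fin m => w.length - (v j).length)), x < w.length := by
      intro x hx
      obtain ⟨i, rfl⟩ := List.mem_ofFn.mp hx
      exact haL i
    obtain ⟨lb, hlblen, hefr⟩ := efr_play (List.ofFn (fun j : Fin m => w.length - (v j).length)) z [] []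
      (by rw [List.length_ofFn]; omega) hlamem hEF
    simp only [List.nil_append, List.length_ofFn] at hefr
    have hlbm : lb.length = m := by simpa using hlblen
    have hgla : ∀ i : Fin m, ((List.ofFn (fun j : Fin m => w.length - (v j).length))).getD (i : ℕ) 0 = w.length - (v i).length := by
      intro i
      rw [List.getD_eq_getElem _ _ (by rw [List.length_ofFn]; exact i.isLt)]
      simp
    have hpiso := efr_pisoR hefr
    have hcondm := hpiso.2.2.2
    have hbL' : ∀ i : Fin m, lb.getD (i : ℕ) 0 < w'.length := by
      intro i
      apply hpiso.2.2.1
      rw [List.getD_eq_getElem _ _ (show (i : ℕ) < lb.length by rw [hlbm]; exact i.isLt)]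
      exact List.getElem_mem _
    have hcompat : ∀ i : Fin m,
        atom0 S z w (w.length - (v i).length) = atom0 S z w' (lb.getD (i : ℕ) 0) ∧
        wEquiv S z n (pre w (w.length - (v i).length)) (pre w' (lb.getD (i : ℕ) 0)) := by
      intro i
      have hiA : (i : ℕ) < ((List.ofFn (fun j : Fin m => w.length - (v j).length))).length := by rw [List.length_ofFn]; exact i.isLt
      have hc := (hcondm (i : ℕ) (i : ℕ) hiA hiA).2.2
      rwa [hgla i] at hc
    have hab : ∀ i j : Fin m,
        (w.length - (v i).length = w.length - (v j).length) ↔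
        (lb.getD (i : ℕ) 0 = lb.getD (j : ℕ) 0) := by
      intro i j
      have hc := (hcondm (i : ℕ) (j : ℕ)
        (by rw [List.length_ofFn]; exact i.isLt) (by rw [List.length_ofFn]; exact j.isLt)).1
      rwa [hgla i, hgla j] at hc
    -- one extra round of the EF game
    obtain ⟨r, hrr⟩ : ∃ r, z - m = r + 1 := ⟨z - m - 1, by omega⟩
    rw [hrr] at hefr
    have succIff : ∀ (i : Fin m) (a₀ b₀ : ℕ),
        PIsoR w.length w'.length
          (fun i j => atom0 S z w i = atom0 S z w' j ∧ wEquiv S z n (pre w i) (pre w' j))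
          ((List.ofFn (fun j : Fin m => w.length - (v j).length)) ++ [a₀]) (lb ++ [b₀]) →
        ((w.length - (v i).length = a₀ + 1) ↔ (lb.getD (i : ℕ) 0 = b₀ + 1)) := by
      intro i a₀ b₀ hp
      have hiA : (i : ℕ) < ((List.ofFn (fun j : Fin m => w.length - (v j).length))).length := by rw [List.length_ofFn]; exact i.isLt
      have hc := (hp.2.2.2 (i : ℕ) ((List.ofFn (fun j : Fin m => w.length - (v j).length))).length
        (by have := i.isLt
            simp only [List.length_append, List.length_ofFn, List.length_cons,
              List.length_nil]; omega)
        (by simp only [List.length_append, List.length_ofFn, List.length_cons,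
              List.length_nil]; omega)).2.1
      rw [getD_append_lt hiA, hgla i, getD_append_len,
          getD_append_lt (show (i : ℕ) < lb.length by rw [hlbm]; exact i.isLt)] at hc
      rw [show ((List.ofFn (fun j : Fin m => w.length - (v j).length))).length = lb.length by rw [hlbm, List.length_ofFn]] at hc
      rw [getD_append_len] at hc
      exact hc
    have round1 : ∀ a₀, a₀ < w.length → ∃ b₀, b₀ < w'.length ∧
        PIsoR w.length w'.length
          (fun i j => atom0 S z w i = atom0 S z w' j ∧ wEquiv S z n (pre w i) (pre w' j))
          ((List.ofFn (fun j : Fin m => w.length - (v j).length)) ++ [a₀]) (lb ++ [b₀]) ∧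
        (atom0 S z w a₀ = atom0 S z w' b₀ ∧ wEquiv S z n (pre w a₀) (pre w' b₀)) := by
      intro a₀ ha₀
      obtain ⟨b₀, hb₀, h'⟩ := hefr.2.1 a₀ ha₀
      have hp := efr_pisoR h'
      refine ⟨b₀, hb₀, hp, ?_⟩
      have hc := (hp.2.2.2 ((List.ofFn (fun j : Fin m => w.length - (v j).length))).length ((List.ofFn (fun j : Fin m => w.length - (v j).length))).length
        (by simp only [List.length_append, List.length_ofFn, List.length_cons,
              List.length_nil]; omega)
        (by simp only [List.length_append, List.length_ofFn, List.length_cons,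
              List.length_nil]; omega)).2.2
      rw [getD_append_len] at hc
      rw [show ((List.ofFn (fun j : Fin m => w.length - (v j).length))).length = lb.length by rw [hlbm, List.length_ofFn]] at hc
      rw [getD_append_len] at hc
      exact hc
    have round2 : ∀ b₀, b₀ < w'.length → ∃ a₀, a₀ < w.length ∧
        PIsoR w.length w'.length
          (fun i j => atom0 S z w i = atom0 S z w' j ∧ wEquiv S z n (pre w i) (pre w' j))
          ((List.ofFn (fun j : Fin m => w.length - (v j).length)) ++ [a₀]) (lb ++ [b₀]) := by
      intro b₀ hb₀
      obtain ⟨a₀, ha₀, h'⟩ := hefr.2.2 b₀ hb₀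
      exact ⟨a₀, ha₀, efr_pisoR h'⟩
    -- position 0 is matched with position 0
    have hab0 : ∀ i : Fin m, (w.length - (v i).length = 0 ↔ lb.getD (i : ℕ) 0 = 0) := by
      intro i
      constructor
      · intro h0
        by_contra hb0
        obtain ⟨a₀, ha₀, hp⟩ := round2 (lb.getD (i : ℕ) 0 - 1) (by have := hbL' i; omega)
        have := (succIff i a₀ (lb.getD (i : ℕ) 0 - 1) hp).mpr (by omega)
        omega
      · intro h0
        by_contra ha0
        obtain ⟨b₀, hb₀, hp, -⟩ := round1 (w.length - (v i).length - 1) (by have := haL i; omega)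
        have := (succIff i (w.length - (v i).length - 1) b₀ hp).mp (by omega)
        omega
    have haz_iff : ∀ i : Fin m, (v i = w ↔ w.length - (v i).length = 0) := by
      intro i
      constructor
      · intro hvi; rw [hvi]; omega
      · intro h
        have := hvlen i
        exact List.IsPrefix.eq_of_length (hv i) (by omega)
    have hbz_iff : ∀ i : Fin m,
        (pre w' (lb.getD (i : ℕ) 0) = w' ↔ lb.getD (i : ℕ) 0 = 0) := by
      intro i
      constructor
      · intro hvi
        have hh := congrArg List.length hvi
        rw [pre, List.length_take] at hh
        have := hbL' i
        omega
      · intro h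
        rw [h, pre, Nat.sub_zero, List.take_length]
    -- the transferred runs
    have hXeq : ∀ i j : Fin m,
        (q i, qh i, w.length - (v i).length) = (q j, qh j, w.length - (v j).length) →
        SRuns S w' (lb.getD (i : ℕ) 0) (q i) (qh i)
          = SRuns S w' (lb.getD (j : ℕ) 0) (q j) (qh j) := by
      intro i j hkij
      simp only [Prod.mk.injEq] at hkij
      rw [hkij.1, hkij.2.1, (hab i j).mp hkij.2.2]
    have hXdisj : ∀ i j : Fin m,
        (q i, qh i, w.length - (v i).length) ≠ (q j, qh j, w.length - (v j).length) →
        ∀ x, x ∈ SRuns S w' (lb.getD (i : ℕ) 0) (q i) (qh i) →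
          x ∈ SRuns S w' (lb.getD (j : ℕ) 0) (q j) (qh j) → False := by
      intro i j hkij x hxi hxj
      obtain ⟨-, hh1, hl1⟩ := hxi
      obtain ⟨-, hh2, hl2⟩ := hxj
      have hh := hh1.symm.trans hh2
      have hl := hl1.symm.trans hl2
      simp only [Option.some.injEq, Prod.mk.injEq, List.cons.injEq, and_true] at hh hl
      have hpl := congrArg List.length hl.2
      rw [pre, pre, List.length_take, List.length_take] at hpl
      have h1 := hbL' i
      have h2 := hbL' j
      have hbij : lb.getD (i : ℕ) 0 = lb.getD (j : ℕ) 0 := by omega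
      exact hkij (by
        rw [show q i = q j from hh, show qh i = qh j from hl.1,
          show w.length - (v i).length = w.length - (v j).length from (hab i j).mpr hbij])
    have hcard : ∀ i : Fin m,
        hasAtLeast ((Finset.univ.filter
            (fun j => (q j, qh j, w.length - (v j).length)
              = (q i, qh i, w.length - (v i).length))).card)
          (SRuns S w' (lb.getD (i : ℕ) 0) (q i) (qh i)) := by
      intro i
      have hcm : ((Finset.univ.filter
          (fun j => (q j, qh j, w.length - (v j).length)
            = (q i, qh i, w.length - (v i).length))).card) ≤ m :=
        le_trans (Finset.card_filter_le _ _) (by simp)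
      have h1 : hasAtLeast ((Finset.univ.filter
          (fun j => (q j, qh j, w.length - (v j).length)
            = (q i, qh i, w.length - (v i).length))).card)
          (SRuns S w (w.length - (v i).length) (q i) (qh i)) := by
        refine ⟨(Finset.univ.filter
          (fun j => (q j, qh j, w.length - (v j).length)
            = (q i, qh i, w.length - (v i).length))).image ρ, ?_, ?_⟩
        · intro x hx
          simp only [Finset.coe_image, Set.mem_image, Finset.mem_coe, Finset.mem_filter,
            Finset.mem_univ, true_and] at hx
          obtain ⟨j, hkj, rfl⟩ := hx
          simp only [Prod.mk.injEq] at hkj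
          obtain ⟨hrun, hhead, hlast⟩ := hρ j
          refine ⟨hrun, ?_, ?_⟩
          · rw [hkj.1] at hhead; exact hhead
          · rw [hkj.2.1, hvpre j, hkj.2.2] at hlast; exact hlast
        · rw [Finset.card_image_of_injective _ hinj]
      have h2 := congrArg (fun t => t.2.1 (q i) (qh i)) (hcompat i).1
      simp only [atom0] at h2
      have h3 := le_tcount (le_trans hcm (le_of_lt hm)) h1
      rw [h2] at h3
      exact hasAtLeast_of_le_tcount h3
    obtain ⟨F, hFinj, hFmem⟩ := assignment
      (fun i : Fin m => (q i, qh i, w.length - (v i).length))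
      (fun i : Fin m => SRuns S w' (lb.getD (i : ℕ) 0) (q i) (qh i))
      hXeq hXdisj hcard
    refine ⟨fun i => pre w' (lb.getD (i : ℕ) 0), F, ?_, ?_, hFinj, ?_, ?_, ?_⟩
    · intro i
      exact List.take_prefix _ _
    · intro i
      have h := (hcompat i).2
      rwa [← hvpre i] at h
    · intro i
      exact hFmem i
    · intro i
      rw [haz_iff i, hbz_iff i]
      exact hab0 i
    · intro i hne
      have ha1 : 1 ≤ w.length - (v i).length := by
        rcases Nat.eq_zero_or_pos (w.length - (v i).length) with h | h
        · exact absurd ((haz_iff i).mpr h) hne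
        · exact h
      obtain ⟨b₀, hb₀, hp, hcm⟩ := round1 (w.length - (v i).length - 1) (by have := haL i; omega)
      have hbsucc : lb.getD (i : ℕ) 0 = b₀ + 1 :=
        (succIff i (w.length - (v i).length - 1) b₀ hp).mp (by omega)
      have hletter := congrArg (fun t => t.1) hcm.1
      simp only [atom0] at hletter
      have hbiL' := hbL' i
      have hjxlt : w.length - (w.length - (v i).length) < w.length := by
        have := hvpos i; have := hvlen i; omega
      have hjylt : w'.length - lb.getD (i : ℕ) 0 < w'.length := by omega
      have e1 : pre w (w.length - (v i).length - 1)
          = w.take (w.length - (w.length - (v i).length) + 1) := by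
        rw [pre]; congr 1; have := hvlen i; omega
      have e2 : pre w' b₀ = w'.take (w'.length - lb.getD (i : ℕ) 0 + 1) := by
        rw [pre]; congr 1; omega
      rw [e1, e2, getLast?_take hjxlt, getLast?_take hjylt,
        List.getElem?_eq_getElem hjxlt, List.getElem?_eq_getElem hjylt] at hletter
      have hcc := Option.some.inj hletter
      have hvtake : v i = w.take (w.length - (w.length - (v i).length)) := by
        rw [show w.length - (w.length - (v i).length) = (v i).length by
          have := hvlen i; omega]
        exact List.prefix_iff_eq_take.mp (hv i)
      refine ⟨w[w.length - (w.length - (v i).length)]'hjxlt,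
        w.drop (w.length - (w.length - (v i).length) + 1),
        w'.drop (w'.length - lb.getD (i : ℕ) 0 + 1), ?_, ?_⟩
      · conv_lhs => rw [← List.take_append_drop (w.length - (w.length - (v i).length)) w]
        rw [List.drop_eq_getElem_cons hjxlt, ← hvtake]
      · conv_lhs => rw [← List.take_append_drop (w'.length - lb.getD (i : ℕ) 0) w']
        rw [List.drop_eq_getElem_cons hjylt, hcc]
        rfl


end S17
end
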